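/- (Addition formula for weight (α, β).) For every real q with 0 < q < 1, integers n ≥ 0, α ≥ 1, β ≥ 1, every real x ≥ 0, every odd positive integer d and Dirichlet character χ modulo d, Ẽ^χ_{n,q}(x | α : β) = Σ_{l=0}^{n} C(n,l) q^{α l x} Ẽ^χ_{l,q}(α : β) [x:q^α]^{n−l}. -/

import Mathlib

open scoped BigOperators

/-- `[x:q] = (q^x - 1)/(q - 1)` with real exponentiation. -/
noncomputable def qNum (q x : ℝ) : ℝ := (q ^ x - 1) / (q - 1)

/-- Dirichlet-type weighted `q`-Euler polynomial with weight `(α, β)`: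
`Ẽ^χ_{n,q}(x|α:β) = [2:q^β] ∑_{m≥0} χ(m) (-1)^m q^{βm} [x+m:q^α]^n`. -/
noncomputable def qEulerChiAB (q : ℝ) (d : ℕ) (χ : DirichletCharacter ℂ d)
    (α β n : ℕ) (x : ℝ) : ℂ :=
  (qNum (q ^ β) 2 : ℂ) *
    ∑' m : ℕ, χ (m : ZMod d) * (-1 : ℂ) ^ m * (q : ℂ) ^ (β * m) *
      ((qNum (q ^ α) (x + (m : ℝ)) : ℝ) : ℂ) ^ n

/-! The addition law `[x+m:Q] = Q^x [m:Q] + [x:Q]` and the binomial theorem split each term of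
the series for `Ẽ^χ_{n,q}(x|α:β)` into a finite combination of terms of the series for
`Ẽ^χ_{l,q}(α:β)`, `l ≤ n`. Summing over `m` termwise is legitimate because those series converge
absolutely: `0 ≤ [m:Q] ≤ 1/(1-Q)` for `0 < Q < 1`, so they are dominated by a geometric series in
`q^β`. -/

section qNum

variable {Q : ℝ}

theorem qNum_eq_div_one_sub (y : ℝ) : qNum Q y = (1 - Q ^ y) / (1 - Q) := by
  rw [qNum, ← neg_sub, ← neg_sub 1, neg_div_neg_eq]

theorem qNum_nonneg (hQ0 : 0 < Q) (hQ1 : Q < 1) {y : ℝ} (hy : 0 ≤ y) : 0 ≤ qNum Q y := by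
  rw [qNum_eq_div_one_sub]
  exact div_nonneg (sub_nonneg.2 (Real.rpow_le_one hQ0.le hQ1.le hy)) (sub_nonneg.2 hQ1.le)

theorem qNum_le_inv_one_sub (hQ0 : 0 ≤ Q) (hQ1 : Q < 1) (y : ℝ) : qNum Q y ≤ (1 - Q)⁻¹ := by
  rw [qNum_eq_div_one_sub, div_eq_mul_inv]
  exact mul_le_of_le_one_left (inv_nonneg.2 (sub_nonneg.2 hQ1.le))
    (sub_le_self _ (Real.rpow_nonneg hQ0 y))

theorem qNum_add (hQ0 : 0 < Q) (hQ1 : Q ≠ 1) (x y : ℝ) :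
    qNum Q (x + y) = Q ^ x * qNum Q y + qNum Q x := by
  have : Q - 1 ≠ 0 := sub_ne_zero.2 hQ1
  simp only [qNum, Real.rpow_add hQ0]
  field_simp
  ring

theorem qNum_add_pow (hQ0 : 0 < Q) (hQ1 : Q ≠ 1) (x y : ℝ) (n : ℕ) :
    qNum Q (x + y) ^ n =
      ∑ l ∈ Finset.range (n + 1), (n.choose l : ℝ) * (Q ^ x) ^ l * qNum Q y ^ l *
        qNum Q x ^ (n - l) := by
  rw [qNum_add hQ0 hQ1, add_pow]
  refine Finset.sum_congr rfl fun l _ => ?_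
  ring

end qNum

noncomputable def qEulerChiABTerm (q : ℝ) (d : ℕ) (χ : DirichletCharacter ℂ d)
    (α β n : ℕ) (x : ℝ) (m : ℕ) : ℂ :=
  χ (m : ZMod d) * (-1 : ℂ) ^ m * (q : ℂ) ^ (β * m) * ((qNum (q ^ α) (x + (m : ℝ)) : ℝ) : ℂ) ^ n

theorem qEulerChiAB_eq_tsum (q : ℝ) (d : ℕ) (χ : DirichletCharacter ℂ d) (α β n : ℕ) (x : ℝ) :
    qEulerChiAB q d χ α β n x = (qNum (q ^ β) 2 : ℂ) * ∑' m, qEulerChiABTerm q d χ α β n x m :=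
  rfl

theorem norm_qEulerChiABTerm_le {q : ℝ} (hq0 : 0 < q) (hq1 : q < 1) {α : ℕ} (hα : 1 ≤ α)
    (β : ℕ) (d : ℕ) (χ : DirichletCharacter ℂ d) (n : ℕ) {x : ℝ} (hx : 0 ≤ x) (m : ℕ) :
    ‖qEulerChiABTerm q d χ α β n x m‖ ≤ ((1 - q ^ α)⁻¹) ^ n * (q ^ β) ^ m := by
  have hQ0 : 0 < q ^ α := pow_pos hq0 α
  have hQ1 : q ^ α < 1 := pow_lt_one₀ hq0.le hq1 (by omega)
  have hqNum : ‖((qNum (q ^ α) (x + m) : ℝ) : ℂ)‖ ≤ (1 - q ^ α)⁻¹ := by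
    rw [Complex.norm_real, Real.norm_of_nonneg (qNum_nonneg hQ0 hQ1 (by positivity))]
    exact qNum_le_inv_one_sub hQ0.le hQ1 _
  calc ‖qEulerChiABTerm q d χ α β n x m‖
      = ‖χ (m : ZMod d)‖ * q ^ (β * m) * ‖((qNum (q ^ α) (x + m) : ℝ) : ℂ)‖ ^ n := by
        simp [qEulerChiABTerm, Complex.norm_real, abs_of_pos hq0]
    _ ≤ 1 * q ^ (β * m) * ((1 - q ^ α)⁻¹) ^ n := by
        gcongr
        exact χ.norm_le_one _
    _ = ((1 - q ^ α)⁻¹) ^ n * (q ^ β) ^ m := by rw [pow_mul]; ring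

theorem summable_qEulerChiABTerm {q : ℝ} (hq0 : 0 < q) (hq1 : q < 1) {α β : ℕ} (hα : 1 ≤ α)
    (hβ : 1 ≤ β) (d : ℕ) (χ : DirichletCharacter ℂ d) (n : ℕ) {x : ℝ} (hx : 0 ≤ x) :
    Summable (qEulerChiABTerm q d χ α β n x) :=
  .of_norm_bounded ((summable_geometric_of_lt_one (pow_nonneg hq0.le β)
      (pow_lt_one₀ hq0.le hq1 (by omega))).mul_left _)
    (norm_qEulerChiABTerm_le hq0 hq1 hα β d χ n hx)

theorem qEulerChiABTerm_eq_sum {q : ℝ} (hq0 : 0 < q) (hq1 : q < 1) {α : ℕ} (hα : 1 ≤ α)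
    (β : ℕ) (d : ℕ) (χ : DirichletCharacter ℂ d) (n : ℕ) (x : ℝ) (m : ℕ) :
    qEulerChiABTerm q d χ α β n x m =
      ∑ l ∈ Finset.range (n + 1),
        (n.choose l : ℂ) * ((q ^ ((↑(α * l) : ℝ) * x) : ℝ) : ℂ) *
          qEulerChiABTerm q d χ α β l 0 m * ((qNum (q ^ α) x : ℝ) : ℂ) ^ (n - l) := by
  have hQ1 : q ^ α ≠ 1 := (pow_lt_one₀ hq0.le hq1 (by omega)).ne
  have hrpow (l : ℕ) : ((q ^ α : ℝ) ^ x) ^ l = q ^ ((α : ℝ) * l * x) := by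
    rw [← Real.rpow_natCast q α, ← Real.rpow_mul hq0.le, ← Real.rpow_mul_natCast hq0.le]
    ring_nf
  have hexp := congrArg (fun t : ℝ => (t : ℂ)) (qNum_add_pow (pow_pos hq0 α) hQ1 x m n)
  simp only [qEulerChiABTerm, zero_add]
  push_cast at hexp ⊢
  rw [hexp, Finset.mul_sum]
  refine Finset.sum_congr rfl fun l _ => ?_
  rw [← hrpow l]
  push_cast
  ring

theorem statement17_general (q : ℝ) (hq0 : 0 < q) (hq1 : q < 1)
    (n α β : ℕ) (hα : 1 ≤ α) (hβ : 1 ≤ β) (x : ℝ)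
    (d : ℕ) (χ : DirichletCharacter ℂ d) :
    qEulerChiAB q d χ α β n x =
      ∑ l ∈ Finset.range (n + 1),
        (n.choose l : ℂ) * ((q ^ ((↑(α * l) : ℝ) * x) : ℝ) : ℂ) *
          qEulerChiAB q d χ α β l 0 * ((qNum (q ^ α) x : ℝ) : ℂ) ^ (n - l) := by
  have hsum (l : ℕ) := summable_qEulerChiABTerm hq0 hq1 hα hβ d χ l le_rfl
  simp only [qEulerChiAB_eq_tsum, qEulerChiABTerm_eq_sum hq0 hq1 hα β d χ n x]
  rw [Summable.tsum_finsetSum fun l _ => ((hsum l).mul_left _).mul_right _, Finset.mul_sum]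
  refine Finset.sum_congr rfl fun l _ => ?_
  rw [tsum_mul_right, tsum_mul_left]
  ring

theorem statement17 (q : ℝ) (hq0 : 0 < q) (hq1 : q < 1)
    (n α β : ℕ) (hα : 1 ≤ α) (hβ : 1 ≤ β) (x : ℝ) (hx : 0 ≤ x)
    (d : ℕ) (hd0 : 0 < d) (hdo : Odd d) (χ : DirichletCharacter ℂ d) :
    qEulerChiAB q d χ α β n x =
      ∑ l ∈ Finset.range (n + 1),
        (n.choose l : ℂ) * ((q ^ ((↑(α * l) : ℝ) * x) : ℝ) : ℂ) *
          qEulerChiAB q d χ α β l 0 * ((qNum (q ^ α) x : ℝ) : ℂ) ^ (n - l) :=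
  statement17_general q hq0 hq1 n α β hα hβ x d χ
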